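/- arXiv:2302.04987 — 6 statements merged into one kernel-verified Lean document; each statement's English description precedes it below -/
import Mathlib

section
/- Let f be convex with L2-Lipschitz Hessian, and let y minimize z ↦ φ_x(z) + (M/6)‖z−x‖³ + (δ/2)‖z−x‖² with ‖(∇²f(x) − B_x)(y−x)‖ ≤ δ_x^y‖y−x‖, δ ≥ δ_x^y, and M ≥ 2L2. Then ⟨∇f(y), x − y⟩ ≥ min{ ‖∇f(y)‖²/(4δ), ‖∇f(y)‖^{3/2}/(3M)^{1/2} }. -/
open RealInnerProductSpace


set_option maxHeartbeats 1000000 in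
lemma aux_key (δ M r E c lam I G : ℝ) (hδpos : 0 < δ) (hMpos : 0 < M)
    (hr : 0 ≤ r) (hE0 : 0 ≤ E) (hG0 : 0 ≤ G)
    (hlam : lam = δ + M / 2 * r) (hI : I = lam * r ^ 2 - c)
    (hG2 : G ^ 2 = E ^ 2 - 2 * lam * c + lam ^ 2 * r ^ 2)
    (hE : E ≤ δ * r + M / 4 * r ^ 2) (hc : c ≤ E * r) :
    min (G ^ 2 / (4 * δ)) (G ^ ((3 : ℝ) / 2) / Real.sqrt (3 * M)) ≤ I := by
  have ht0 : (0:ℝ) ≤ M / 4 * r ^ 3 := by positivity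
  have hEr : E * r ≤ (δ * r + M / 4 * r ^ 2) * r := mul_le_mul_of_nonneg_right hE hr
  have hIt : M / 4 * r ^ 3 ≤ I := by nlinarith [hEr, hc]
  have hI0 : (0:ℝ) ≤ I := le_trans ht0 hIt
  have hEsq : E ^ 2 ≤ (δ * r + M / 4 * r ^ 2) ^ 2 := pow_le_pow_left₀ hE0 hE 2
  have hc' : c = (δ + M / 2 * r) * r ^ 2 - I := by rw [hlam] at hI; linarith
  have hG2' : G ^ 2 = E ^ 2 - 2 * (δ + M / 2 * r) * ((δ + M / 2 * r) * r ^ 2 - I)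
      + (δ + M / 2 * r) ^ 2 * r ^ 2 := by rw [hG2, hlam, hc']
  have hup : G ^ 2 ≤ 2 * δ * (I - M / 4 * r ^ 3) + M * r * (I - 3 / 4 * (M / 4 * r ^ 3)) := by
    nlinarith [hEsq, hG2']
  rcases le_total (M * r * (I - 3 / 4 * (M / 4 * r ^ 3))) (2 * δ * (I - M / 4 * r ^ 3)) with hA | hB
  · have h4 : G ^ 2 ≤ 4 * δ * I := by nlinarith [mul_nonneg hδpos.le ht0]
    refine le_trans (min_le_left _ _) ?_
    rw [div_le_iff₀ (by positivity)]
    linarith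
  · have hB2 : G ^ 2 ≤ 2 * (M * r * (I - 3 / 4 * (M / 4 * r ^ 3))) := by linarith
    have hq : 32 * (M / 4 * r ^ 3) * (I - 3 / 4 * (M / 4 * r ^ 3)) ^ 3 ≤ 9 * I ^ 4 := by
      set t := M / 4 * r ^ 3 with ht
      nlinarith [mul_nonneg (sq_nonneg (t - I/3)) (sq_nonneg (t - 5*I/3)),
        mul_nonneg (sq_nonneg (t - I/3)) (sq_nonneg I), sq_nonneg (I^2)]
    have hG6 : G ^ 6 ≤ 9 * M ^ 2 * I ^ 4 := by
      have h3 : (G ^ 2) ^ 3 ≤ (2 * (M * r * (I - 3 / 4 * (M / 4 * r ^ 3)))) ^ 3 :=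
        pow_le_pow_left₀ (sq_nonneg G) hB2 3
      calc G ^ 6 = (G ^ 2) ^ 3 := by ring
        _ ≤ (2 * (M * r * (I - 3 / 4 * (M / 4 * r ^ 3)))) ^ 3 := h3
        _ = M ^ 2 * (32 * (M / 4 * r ^ 3) * (I - 3 / 4 * (M / 4 * r ^ 3)) ^ 3) := by ring
        _ ≤ M ^ 2 * (9 * I ^ 4) := mul_le_mul_of_nonneg_left hq (sq_nonneg M)
        _ = 9 * M ^ 2 * I ^ 4 := by ring
    have h2 : (0:ℝ) ≤ 3 * M * I ^ 2 := by positivity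
    have hG3 : G ^ 3 ≤ 3 * M * I ^ 2 := by
      have h1 : (G ^ 3) ^ 2 ≤ (3 * M * I ^ 2) ^ 2 := by nlinarith [hG6]
      have h5 := Real.sqrt_le_sqrt h1
      rwa [Real.sqrt_sq (pow_nonneg hG0 3), Real.sqrt_sq h2] at h5
    have hrpow : G ^ ((3:ℝ)/2) = Real.sqrt (G ^ 3) := by
      rw [Real.sqrt_eq_rpow, ← Real.rpow_natCast G 3, ← Real.rpow_mul hG0]
      norm_num
    have hfin : G ^ ((3:ℝ)/2) ≤ I * Real.sqrt (3 * M) := by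
      rw [hrpow]
      refine (Real.sqrt_le_sqrt hG3).trans (le_of_eq ?_)
      rw [show 3 * M * I ^ 2 = (I * Real.sqrt (3 * M)) ^ 2 from by
        rw [mul_pow, Real.sq_sqrt (by positivity : (0:ℝ) ≤ 3 * M)]; ring]
      exact Real.sqrt_sq (mul_nonneg hI0 (Real.sqrt_nonneg _))
    refine le_trans (min_le_right _ _) ?_
    rw [div_le_iff₀ (Real.sqrt_pos.mpr (by positivity))]
    exact hfin


set_option maxHeartbeats 1000000 in
/-- Progress of the inexact cubic regularized Newton step. -/
theorem stmt_3 {d : ℕ} (f : EuclideanSpace ℝ (Fin d) → ℝ)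
    (Hess B : EuclideanSpace ℝ (Fin d) →L[ℝ] EuclideanSpace ℝ (Fin d))
    (L2 δ δxy M : ℝ) (hδxy : 0 ≤ δxy) (hδ : δxy ≤ δ) (hδpos : 0 < δ)
    (hM : 2 * L2 ≤ M) (hL2 : 0 ≤ L2) (hMpos : 0 < M)
    (hconv : ConvexOn ℝ Set.univ f)
    (x y : EuclideanSpace ℝ (Fin d))
    (hBpsd : ∀ v, 0 ≤ ⟪B v, v⟫)
    (hdir : ‖(Hess - B) (y - x)‖ ≤ δxy * ‖y - x‖)
    (hTaylor : ‖(gradient f x + Hess (y - x)) - gradient f y‖ ≤ L2 / 2 * ‖y - x‖ ^ 2)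
    (hopt : gradient f x + B (y - x) + (δ + M / 2 * ‖y - x‖) • (y - x) = 0) :
    min (‖gradient f y‖ ^ 2 / (4 * δ))
        (‖gradient f y‖ ^ ((3 : ℝ) / 2) / Real.sqrt (3 * M))
      ≤ ⟪gradient f y, x - y⟫ := by
  set s := y - x with hs
  set lam := δ + M / 2 * ‖s‖ with hlam
  set e := gradient f y - (gradient f x + B s) with he_def
  have heq : gradient f y = e - lam • s := by
    have h1 : e - lam • s = gradient f y - (gradient f x + B s + lam • s) := by
      rw [he_def]; abel
    rw [h1, hopt, sub_zero]
  have hIeq : ⟪gradient f y, x - y⟫ = lam * ‖s‖ ^ 2 - ⟪e, s⟫ := by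
    have hxy : x - y = -s := by rw [hs]; abel
    rw [heq, hxy, inner_neg_right, inner_sub_left, real_inner_smul_left,
      real_inner_self_eq_norm_sq]
    ring
  have hGsq : ‖gradient f y‖ ^ 2 = ‖e‖ ^ 2 - 2 * lam * ⟪e, s⟫ + lam ^ 2 * ‖s‖ ^ 2 := by
    rw [heq, norm_sub_sq_real, real_inner_smul_right, norm_smul, Real.norm_eq_abs,
      mul_pow, sq_abs]
    ring
  have hE : ‖e‖ ≤ δ * ‖s‖ + M / 4 * ‖s‖ ^ 2 := by
    have h1 : e = -((gradient f x + Hess s) - gradient f y) + (Hess s - B s) := by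
      rw [he_def]; abel
    have h2 : ‖e‖ ≤ ‖(gradient f x + Hess s) - gradient f y‖ + ‖Hess s - B s‖ := by
      rw [h1]
      refine (norm_add_le _ _).trans ?_
      rw [norm_neg]
    have h3 : ‖Hess s - B s‖ ≤ δxy * ‖s‖ := by
      simpa [ContinuousLinearMap.sub_apply] using hdir
    have hr : (0:ℝ) ≤ ‖s‖ := norm_nonneg s
    nlinarith [hTaylor, h3, h2, sq_nonneg ‖s‖]
  exact aux_key δ M ‖s‖ ‖e‖ ⟪e, s⟫ lam ⟪gradient f y, x - y⟫ ‖gradient f y‖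
    hδpos hMpos (norm_nonneg s) (norm_nonneg e) (norm_nonneg _)
    hlam hIeq hGsq hE (real_inner_le_norm e s)
end

section
/- Let {ξ_t} be a sequence of nonnegative reals satisfying ξ_t − ξ_{t+1} ≥ ξ_{t+1}^{1+α} for some α > 0 and all t ≥ 0. Then for all t ≥ 1, ξ_t ≤ [ (1 + 1/α)(1 + ξ_0^α) / t ]^{1/α}. -/
/-!
Put `C = (1 + 1/α)(1 + ξ₀^α)` and `v_t = ξ_t^α`. The recursion forces
`v_t v_{t+1} ≤ C (v_t - v_{t+1})`, i.e. `1/v_{t+1} ≥ 1/v_t + 1/C`, so `t v_t ≤ C`.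
For `b = ξ_{t+1} ≤ a = ξ_t`, the power mean bound `(1 + α) a b^α ≤ a^α (a + α b)` turns the
recursion into this form, because `a b^α = b^(1+α) + (a - b) b^α ≤ (1 + ξ₀^α)(a - b)`.
-/

open Real

namespace Real

theorem one_add_mul_rpow_le_one_add_mul {α r : ℝ} (hα : 0 < α) (hr₀ : 0 ≤ r) (hr₁ : r ≤ 1) :
    (1 + α) * r ^ α ≤ 1 + α * r := by
  rcases le_total α 1 with hα₁ | hα₁
  · have bernoulli := rpow_one_add_le_one_add_mul_self (s := r - 1) (by linarith) hα.le hα₁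
    rw [add_sub_cancel] at bernoulli
    nlinarith [mul_le_mul_of_nonneg_left bernoulli (by positivity : (0 : ℝ) ≤ 1 + α),
      mul_nonneg (sq_nonneg α) (sub_nonneg.2 hr₁)]
  · nlinarith [rpow_le_self_of_le_one hr₀ hr₁ hα₁]

theorem one_add_mul_mul_rpow_le_rpow_mul {α y z : ℝ} (hα : 0 < α) (hy : 0 ≤ y) (hyz : y ≤ z) :
    (1 + α) * z * y ^ α ≤ z ^ α * (z + α * y) := by
  rcases hy.eq_or_lt with rfl | hy₀
  · rw [zero_rpow hα.ne', mul_zero, mul_zero, add_zero]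
    exact mul_nonneg (rpow_nonneg hyz α) hyz
  have hz := hy₀.trans_le hyz
  have hzα := rpow_pos_of_pos hz α
  have hratio := one_add_mul_rpow_le_one_add_mul hα (div_nonneg hy hz.le)
    ((div_le_one hz).2 hyz)
  rw [div_rpow hy hz.le, ← mul_div_assoc, div_le_iff₀ hzα] at hratio
  calc (1 + α) * z * y ^ α = z * ((1 + α) * y ^ α) := by ring
    _ ≤ z * ((1 + α * (y / z)) * z ^ α) := by gcongr
    _ = z ^ α * (z + α * y) := by field_simp

end Real

theorem nat_mul_le_of_mul_succ_le_mul_sub {v : ℕ → ℝ} {C : ℝ} (hC : 0 < C) (hv : ∀ t, 0 ≤ v t)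
    (hstep : ∀ t, v t * v (t + 1) ≤ C * (v t - v (t + 1))) (t : ℕ) : t * v t ≤ C := by
  induction t with
  | zero => simpa using hC.le
  | succ n ih =>
    rcases (hv n).eq_or_lt with hn | hn
    · have := hstep n
      rw [← hn] at this
      push_cast
      nlinarith [hv (n + 1)]
    · push_cast
      refine le_of_mul_le_mul_right ?_ hn
      nlinarith [hstep n, mul_le_mul_of_nonneg_right ih (hv (n + 1))]

theorem rpow_mul_rpow_le_of_rpow_one_add_le_sub {α a b M : ℝ} (hα : 0 < α) (hb : 0 ≤ b)
    (hba : b ≤ a) (haM : a ≤ M) (h : b ^ (1 + α) ≤ a - b) :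
    a ^ α * b ^ α ≤ (1 + 1 / α) * (1 + M ^ α) * (a ^ α - b ^ α) := by
  have hMα : 0 ≤ M ^ α := rpow_nonneg (hb.trans (hba.trans haM)) α
  rcases hb.eq_or_lt with rfl | hb₀
  · rw [zero_rpow hα.ne', mul_zero]
    have := rpow_nonneg hba α
    positivity
  have ha := hb₀.trans_le hba
  have hslack : a * b ^ α ≤ (1 + M ^ α) * (a - b) := by
    rw [rpow_add hb₀, rpow_one] at h
    nlinarith [rpow_le_rpow hb (hba.trans haM) hα.le]
  have hmean := one_add_mul_mul_rpow_le_rpow_mul hα hb hba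
  have hscaled : α * a * (a ^ α * b ^ α) ≤ α * a * ((1 + 1 / α) * (1 + M ^ α) * (a ^ α - b ^ α)) :=
    calc α * a * (a ^ α * b ^ α) = α * a ^ α * (a * b ^ α) := by ring
      _ ≤ α * a ^ α * ((1 + M ^ α) * (a - b)) := by gcongr
      _ ≤ (1 + M ^ α) * ((1 + α) * a * (a ^ α - b ^ α)) := by nlinarith
      _ = α * a * ((1 + 1 / α) * (1 + M ^ α) * (a ^ α - b ^ α)) := by field_simp; ring
  exact le_of_mul_le_mul_left hscaled (by positivity)

/-- Rate of convergence of a nonnegative sequence satisfying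
`ξ_t − ξ_{t+1} ≥ ξ_{t+1}^{1+α}`. -/
theorem stmt_5 (α : ℝ) (hα : 0 < α) (ξ : ℕ → ℝ)
    (hpos : ∀ t, 0 ≤ ξ t)
    (hdec : ∀ t, ξ (t + 1) ^ (1 + α) ≤ ξ t - ξ (t + 1)) :
    ∀ t : ℕ, 1 ≤ t →
      ξ t ≤ ((1 + 1 / α) * (1 + ξ 0 ^ α) / (t : ℝ)) ^ (1 / α) := by
  have hanti : Antitone ξ := antitone_nat_of_succ_le fun t => by
    linarith [hdec t, rpow_nonneg (hpos (t + 1)) (1 + α)]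
  have hC : 0 < (1 + 1 / α) * (1 + ξ 0 ^ α) := by
    have := rpow_nonneg (hpos 0) α
    positivity
  have hbound := nat_mul_le_of_mul_succ_le_mul_sub hC (fun t => rpow_nonneg (hpos t) α)
    fun t => rpow_mul_rpow_le_of_rpow_one_add_le_sub hα (hpos (t + 1)) (hanti t.le_succ)
      (hanti t.zero_le) (hdec t)
  intro t ht
  have ht₀ : (0 : ℝ) < t := by exact_mod_cast ht
  have hpow : ξ t ^ α ≤ (1 + 1 / α) * (1 + ξ 0 ^ α) / t := by
    rw [le_div_iff₀ ht₀, mul_comm]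
    exact hbound t
  simpa only [one_div] using (le_rpow_inv_iff_of_pos (hpos t) (div_pos hC ht₀).le hα).2 hpow
end

section
/- For any i ≥ 2 and all x, y ∈ ℝ^n, with d_i(x) = ‖x‖^i/i, one has d_i(x) − d_i(y) − ⟨∇d_i(y), x − y⟩ ≥ (1/2)^{i−2} d_i(x − y). -/
/-!
The gradient `‖x‖^(p-2) • x` of `‖x‖^p / p` is uniformly monotone:
`⟪‖x‖^(p-2) • x - ‖y‖^(p-2) • y, x - y⟫` splits as `(‖x‖^(p-2) + ‖y‖^(p-2))/2 * ‖x - y‖^2` plus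
a nonnegative term, and convexity of `t ↦ t^(p-2)` together with `‖x - y‖ ≤ ‖x‖ + ‖y‖` bounds the
first factor below by `(‖x - y‖/2)^(p-2)`. Integrating this along the segment from `y` to `x`,
where the gradient gap at `y + t(x - y)` is tested against `t(x - y)`, produces the factor `1/p`.
-/

open RealInnerProductSpace Set

lemma add_div_two_pow_le {a b : ℝ} (ha : 0 ≤ a) (hb : 0 ≤ b) (q : ℕ) :
    ((a + b) / 2) ^ q ≤ (a ^ q + b ^ q) / 2 := by
  have := (convexOn_pow q).2 (mem_Ici.2 ha) (mem_Ici.2 hb) (by norm_num : (0 : ℝ) ≤ 1 / 2)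
    (by norm_num : (0 : ℝ) ≤ 1 / 2) (by norm_num)
  simp only [smul_eq_mul] at this
  rwa [← mul_add, ← mul_add, one_div_mul_eq_div, one_div_mul_eq_div] at this

section

variable {E : Type*} [NormedAddCommGroup E] [InnerProductSpace ℝ E]

lemma inner_norm_pow_smul_sub_eq (q : ℕ) (x y : E) :
    ⟪‖x‖ ^ q • x - ‖y‖ ^ q • y, x - y⟫ = (‖x‖ ^ q + ‖y‖ ^ q) / 2 * ‖x - y‖ ^ 2
      + (‖x‖ ^ q - ‖y‖ ^ q) * (‖x‖ ^ 2 - ‖y‖ ^ 2) / 2 := by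
  simp only [inner_sub_left, inner_sub_right, real_inner_smul_left, real_inner_self_eq_norm_sq,
    norm_sub_sq_real, real_inner_comm x y]
  ring

lemma half_pow_mul_norm_sub_pow_le_inner (q : ℕ) (x y : E) :
    (1 / 2) ^ q * ‖x - y‖ ^ (q + 2) ≤ ⟪‖x‖ ^ q • x - ‖y‖ ^ q • y, x - y⟫ := by
  have hmono : 0 ≤ (‖x‖ ^ q - ‖y‖ ^ q) * (‖x‖ ^ 2 - ‖y‖ ^ 2) := by
    rcases le_total ‖x‖ ‖y‖ with h | h
    · exact mul_nonneg_of_nonpos_of_nonpos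
        (sub_nonpos.2 (pow_le_pow_left₀ (norm_nonneg _) h q))
        (sub_nonpos.2 (pow_le_pow_left₀ (norm_nonneg _) h 2))
    · exact mul_nonneg (sub_nonneg.2 (pow_le_pow_left₀ (norm_nonneg _) h q))
        (sub_nonneg.2 (pow_le_pow_left₀ (norm_nonneg _) h 2))
  have hmean : (‖x - y‖ / 2) ^ q ≤ (‖x‖ ^ q + ‖y‖ ^ q) / 2 :=
    (pow_le_pow_left₀ (div_nonneg (norm_nonneg _) zero_le_two)
      (div_le_div_of_nonneg_right (norm_sub_le x y) zero_le_two) q).trans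
      (add_div_two_pow_le (norm_nonneg x) (norm_nonneg y) q)
  calc (1 / 2) ^ q * ‖x - y‖ ^ (q + 2) = (‖x - y‖ / 2) ^ q * ‖x - y‖ ^ 2 := by ring
    _ ≤ (‖x‖ ^ q + ‖y‖ ^ q) / 2 * ‖x - y‖ ^ 2 := by gcongr
    _ ≤ _ := by rw [inner_norm_pow_smul_sub_eq]; linarith

lemma hasFDerivAt_norm_pow (q : ℕ) (x : E) :
    HasFDerivAt (fun x : E ↦ ‖x‖ ^ (q + 2)) (((q + 2 : ℝ) * ‖x‖ ^ q) • innerSL ℝ x) x := by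
  have h := hasFDerivAt_norm_rpow x (p := q + 2)
    (lt_add_of_nonneg_of_lt q.cast_nonneg one_lt_two)
  simp only [add_sub_cancel_right, Real.rpow_natCast] at h
  convert h using 2 with z
  exact_mod_cast (Real.rpow_natCast ‖z‖ (q + 2)).symm

lemma hasDerivAt_norm_pow_add_smul (q : ℕ) (y h : E) (t : ℝ) :
    HasDerivAt (fun t : ℝ ↦ ‖y + t • h‖ ^ (q + 2) / (q + 2))
      ⟪‖y + t • h‖ ^ q • (y + t • h), h⟫ t := by
  have hline : HasDerivAt (fun t : ℝ ↦ y + t • h) h t := by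
    simpa using ((hasDerivAt_id t).smul_const h).const_add y
  refine (((hasFDerivAt_norm_pow q (y + t • h)).comp_hasDerivAt t hline).div_const
    (q + 2)).congr_deriv ?_
  simp only [smul_apply, innerSL_apply_apply, smul_eq_mul, real_inner_smul_left]
  field_simp

theorem half_pow_mul_norm_sub_pow_div_le_bregman (q : ℕ) (x y : E) :
    (1 / 2) ^ q * (‖x - y‖ ^ (q + 2) / (q + 2))
      ≤ ‖x‖ ^ (q + 2) / (q + 2) - ‖y‖ ^ (q + 2) / (q + 2) - ⟪‖y‖ ^ q • y, x - y⟫ := by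
  obtain ⟨h, rfl⟩ : ∃ h, x = y + h := ⟨x - y, (add_sub_cancel y x).symm⟩
  rw [add_sub_cancel_left]
  set c := (1 / 2 : ℝ) ^ q * ‖h‖ ^ (q + 2)
  let φ : ℝ → ℝ := fun t ↦
    ‖y + t • h‖ ^ (q + 2) / (q + 2) - t * ⟪‖y‖ ^ q • y, h⟫ - c * (t ^ (q + 2) / (q + 2))
  let φ' : ℝ → ℝ := fun t ↦
    ⟪‖y + t • h‖ ^ q • (y + t • h), h⟫ - ⟪‖y‖ ^ q • y, h⟫ - c * t ^ (q + 1)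
  have hφ : ∀ t, HasDerivAt φ (φ' t) t := by
    intro t
    have hpow : HasDerivAt (fun t : ℝ ↦ t ^ (q + 2) / (q + 2)) (t ^ (q + 1)) t := by
      refine ((hasDerivAt_pow (q + 2) t).div_const (q + 2)).congr_deriv ?_
      push_cast
      field_simp
    exact ((hasDerivAt_norm_pow_add_smul q y h t).sub
      ((hasDerivAt_id t).mul_const _ |>.congr_deriv (one_mul _))).sub (hpow.const_mul c)
  have hφ' : ∀ t, 0 < t → 0 ≤ φ' t := by
    intro t ht
    have key := half_pow_mul_norm_sub_pow_le_inner q (y + t • h) y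
    rw [add_sub_cancel_left, norm_smul, Real.norm_of_nonneg ht.le, inner_smul_right,
      inner_sub_left] at key
    refine (mul_nonneg_iff_of_pos_left ht).1 ?_
    calc 0 ≤ t * ⟪‖y + t • h‖ ^ q • (y + t • h), h⟫ - t * ⟪‖y‖ ^ q • y, h⟫
          - (1 / 2) ^ q * (t * ‖h‖) ^ (q + 2) := by linarith
      _ = t * φ' t := by simp only [φ', c]; ring
  have hmono : MonotoneOn φ (Ici 0) :=
    monotoneOn_of_hasDerivWithinAt_nonneg (convex_Ici 0)
      (fun t _ ↦ (hφ t).continuousAt.continuousWithinAt)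
      (fun t _ ↦ (hφ t).hasDerivWithinAt)
      (fun t ht ↦ hφ' t (by simpa using ht))
  have h01 := hmono self_mem_Ici (mem_Ici.2 zero_le_one) zero_le_one
  simp only [φ, c, zero_smul, add_zero, one_smul, zero_mul, sub_zero, one_mul, one_pow, ne_eq,
    add_eq_zero, two_ne_zero, and_false, not_false_eq_true, zero_pow, zero_div, mul_zero,
    mul_one_div, mul_div_assoc] at h01
  linarith

end

/-- Uniform convexity inequality for `d_i(x) = ‖x‖^i / i`. -/
theorem stmt_8 {n : ℕ} (i : ℕ) (hi : 2 ≤ i) (x y : EuclideanSpace ℝ (Fin n)) :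
    ((1 : ℝ) / 2) ^ (i - 2) * (‖x - y‖ ^ i / i)
      ≤ ‖x‖ ^ i / i - ‖y‖ ^ i / i - ⟪(‖y‖ ^ (i - 2)) • y, x - y⟫ := by
  obtain ⟨q, rfl⟩ := Nat.exists_eq_add_of_le' hi
  rw [Nat.add_sub_cancel]
  push_cast
  exact half_pow_mul_norm_sub_pow_div_le_bregman q x y
end

section
/- Let h : ℝ^n → ℝ be convex differentiable, x₀ ∈ ℝ^n, θ₂, θ₃ ≥ 0, and let x̄ minimize h̄(x) = h(x) + (θ₂/2)‖x − x₀‖² + (θ₃/3)‖x − x₀‖³. Then for all x, h̄(x) ≥ h̄(x̄) + (θ₂/2)‖x − x̄‖² + (θ₃/6)‖x − x̄‖³. -/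
open RealInnerProductSpace

theorem cube_key (s r d : ℝ) (hs : 0 ≤ s) (hr : 0 ≤ r) (hd : 0 ≤ d)
    (h1 : d ≤ s + r) (h2 : r - s ≤ d) (h3 : s - r ≤ d) :
    d^3 ≤ 2*r^3 + s^3 - 3*s*r^2 + 3*s*d^2 := by
  rcases le_total s r with hsr | hsr
  · rcases le_total d (2*s) with hds | hds
    · nlinarith [mul_nonneg (by linarith : (0:ℝ) ≤ d - (r-s)) (mul_nonneg (by linarith : (0:ℝ) ≤ 2*s - d) hd),
        mul_nonneg (by linarith : (0:ℝ) ≤ d - (r-s)) (mul_nonneg (by linarith : (0:ℝ) ≤ 2*s - (r-s)) (by linarith : (0:ℝ) ≤ r-s)),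
        mul_nonneg (by linarith : (0:ℝ) ≤ d - (r-s)) (mul_nonneg (by linarith : (0:ℝ) ≤ 2*s - d) (by linarith : (0:ℝ) ≤ r-s)),
        mul_nonneg (by linarith : (0:ℝ) ≤ d - (r-s)) (mul_nonneg (by linarith : (0:ℝ) ≤ 2*s - (r-s)) hd),
        mul_nonneg (sq_nonneg (r-s)) (by linarith : (0:ℝ) ≤ (r-s) + 6*s)]
    · have hb : 0 ≤ d^2 + d*(r+s) + (r+s)^2 - 3*s*(d + (r+s)) := by
        nlinarith [mul_nonneg (by linarith : (0:ℝ) ≤ d - 2*s) hd,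
          mul_nonneg (by linarith : (0:ℝ) ≤ (r+s) - 2*s) (by linarith : (0:ℝ) ≤ r+s),
          mul_nonneg (by linarith : (0:ℝ) ≤ d - 2*s) (by linarith : (0:ℝ) ≤ r+s),
          mul_nonneg (by linarith : (0:ℝ) ≤ (r+s) - 2*s) hd]
      nlinarith [mul_nonneg (by linarith : (0:ℝ) ≤ (s+r) - d) hb,
        mul_nonneg (by linarith : (0:ℝ) ≤ r-s) (sq_nonneg (r-s)),
        mul_nonneg hs (mul_nonneg hs hs)]
  · nlinarith [mul_nonneg (by linarith : (0:ℝ) ≤ d - (s-r)) (mul_nonneg (by linarith : (0:ℝ) ≤ 2*s - d) hd),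
      mul_nonneg (by linarith : (0:ℝ) ≤ d - (s-r)) (mul_nonneg (by linarith : (0:ℝ) ≤ 2*s - (s-r)) (by linarith : (0:ℝ) ≤ s-r)),
      mul_nonneg (by linarith : (0:ℝ) ≤ d - (s-r)) (mul_nonneg (by linarith : (0:ℝ) ≤ 2*s - d) (by linarith : (0:ℝ) ≤ s-r)),
      mul_nonneg (by linarith : (0:ℝ) ≤ d - (s-r)) (mul_nonneg (by linarith : (0:ℝ) ≤ 2*s - (s-r)) hd),
      mul_nonneg (mul_nonneg (by linarith : (0:ℝ) ≤ r+s) (by linarith : (0:ℝ) ≤ s-r)) (by linarith : (0:ℝ) ≤ s-r)]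

theorem bregman3 {E : Type*} [NormedAddCommGroup E] [InnerProductSpace ℝ E] (a b : E) :
    ‖a‖^3/3 + ‖a‖ * ⟪a, b - a⟫ + ‖b - a‖^3/6 ≤ ‖b‖^3/3 := by
  have hc : ⟪a, b - a⟫ = ⟪a, b⟫ - ‖a‖^2 := by
    rw [inner_sub_right, real_inner_self_eq_norm_sq]
  have hd2 : ‖b - a‖^2 = ‖b‖^2 - 2*⟪a,b⟫ + ‖a‖^2 := by
    rw [norm_sub_sq_real, real_inner_comm]
  have key := cube_key ‖a‖ ‖b‖ ‖b - a‖ (norm_nonneg _) (norm_nonneg _) (norm_nonneg _)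
    (by linarith [norm_sub_le b a]) (norm_sub_norm_le b a)
    (by simpa [norm_sub_rev] using norm_sub_norm_le a b)
  have hcv : ⟪a,b⟫ = (‖a‖^2 + ‖b‖^2 - ‖b-a‖^2)/2 := by linarith
  rw [hc, hcv]
  nlinarith [key]

theorem cube_combo {E : Type*} [NormedAddCommGroup E] [InnerProductSpace ℝ E]
    (a b : E) (t : ℝ) (ht0 : 0 ≤ t) (ht1 : t ≤ 1) :
    ‖a + t • (b - a)‖^3 ≤ (1-t)*‖a‖^3 + t*‖b‖^3
      - ((1-t)*t^3 + t*(1-t)^3) * ‖b - a‖^3 / 2 := by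
  set m := a + t • (b - a) with hm
  have hbm : b - m = (1-t) • (b - a) := by rw [hm]; module
  have ham : a - m = (-t) • (b - a) := by rw [hm]; module
  have h1 := bregman3 m b
  have h2 := bregman3 m a
  rw [hbm, real_inner_smul_right, norm_smul, Real.norm_eq_abs,
    abs_of_nonneg (by linarith : (0:ℝ) ≤ 1 - t)] at h1
  rw [ham, real_inner_smul_right, norm_smul, Real.norm_eq_abs, abs_neg,
    abs_of_nonneg ht0] at h2
  have H1 : 0 ≤ t * (‖b‖^3/3 - (‖m‖^3/3 + ‖m‖ * ((1-t) * ⟪m, b - a⟫) + ((1-t)*‖b-a‖)^3/6)) :=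
    mul_nonneg ht0 (by linarith)
  have H2 : 0 ≤ (1-t) * (‖a‖^3/3 - (‖m‖^3/3 + ‖m‖ * (-t * ⟪m, b - a⟫) + (t*‖b-a‖)^3/6)) :=
    mul_nonneg (by linarith) (by linarith)
  nlinarith [H1, H2]

theorem quad_combo {E : Type*} [NormedAddCommGroup E] [InnerProductSpace ℝ E]
    (a b : E) (t : ℝ) :
    ‖a + t • (b - a)‖^2 = (1-t)*‖a‖^2 + t*‖b‖^2 - t*(1-t)*‖b - a‖^2 := by
  have hc : ⟪a, b - a⟫ = ⟪a, b⟫ - ‖a‖^2 := by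
    rw [inner_sub_right, real_inner_self_eq_norm_sq]
  have hd2 : ‖b - a‖^2 = ‖b‖^2 - 2*⟪a,b⟫ + ‖a‖^2 := by
    rw [norm_sub_sq_real, real_inner_comm]
  have e1 : ‖a + t • (b - a)‖^2 = ‖a‖^2 + 2*(t*⟪a, b-a⟫) + t^2*‖b-a‖^2 := by
    rw [norm_add_sq_real, real_inner_smul_right, norm_smul, Real.norm_eq_abs]
    rw [mul_pow, sq_abs]
  rw [e1, hc]
  linear_combination t * hd2

/-- main -/
theorem stmt_9 {n : ℕ} (h : EuclideanSpace ℝ (Fin n) → ℝ)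
    (gh : EuclideanSpace ℝ (Fin n) → EuclideanSpace ℝ (Fin n))
    (hdiff : ∀ z, HasGradientAt h (gh z) z)
    (hconv : ConvexOn ℝ Set.univ h)
    (x₀ : EuclideanSpace ℝ (Fin n)) (θ₂ θ₃ : ℝ) (hθ₂ : 0 ≤ θ₂) (hθ₃ : 0 ≤ θ₃)
    (hbar : EuclideanSpace ℝ (Fin n) → ℝ)
    (hhbar : ∀ z, hbar z = h z + θ₂ / 2 * ‖z - x₀‖ ^ 2 + θ₃ / 3 * ‖z - x₀‖ ^ 3)
    (xb : EuclideanSpace ℝ (Fin n)) (hxb : ∀ z, hbar xb ≤ hbar z) :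
    ∀ x, hbar xb + θ₂ / 2 * ‖x - xb‖ ^ 2 + θ₃ / 6 * ‖x - xb‖ ^ 3 ≤ hbar x := by
  intro x
  set a := xb - x₀ with ha
  set b := x - x₀ with hb
  have hba : x - xb = b - a := by rw [ha, hb]; abel
  have key : ∀ t : ℝ, t ∈ Set.Ioo (0:ℝ) 1 →
      θ₂/2*(1-t)*‖x-xb‖^2 + θ₃/6*((1-t)*t^2+(1-t)^3)*‖x-xb‖^3 ≤ hbar x - hbar xb := by
    intro t ht
    obtain ⟨ht0, ht1⟩ := ht
    rw [hba]
    set z := xb + t • (x - xb) with hz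
    have hzm : z - x₀ = a + t • (b - a) := by rw [hz, ha, ← hba]; abel
    have hconvh : h z ≤ (1-t) * h xb + t * h x := by
      have hc := hconv.2 (Set.mem_univ xb) (Set.mem_univ x)
        (by linarith : (0:ℝ) ≤ 1 - t) (le_of_lt ht0) (by ring)
      have he : (1-t) • xb + t • x = z := by rw [hz]; module
      rwa [he] at hc
    have hq := quad_combo a b t
    have hcu := cube_combo a b t (le_of_lt ht0) (le_of_lt ht1)
    have hmin := hxb z
    rw [hhbar z, hhbar xb, hzm] at hmin
    have hxbx : xb - x₀ = a := rfl
    have hxx : x - x₀ = b := rfl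
    rw [hxbx] at hmin
    have P3 : 0 ≤ θ₃ * ((1-t)*‖a‖^3 + t*‖b‖^3
        - ((1-t)*t^3 + t*(1-t)^3) * ‖b - a‖^3 / 2 - ‖a + t • (b - a)‖^3) :=
      mul_nonneg hθ₃ (by linarith)
    have Q2 : θ₂ * ‖a + t • (b - a)‖^2
        = θ₂ * ((1-t)*‖a‖^2 + t*‖b‖^2 - t*(1-t)*‖b - a‖^2) := by rw [hq]
    have G : t * (θ₂/2*(1-t)*‖b-a‖^2 + θ₃/6*((1-t)*t^2+(1-t)^3)*‖b-a‖^3)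
        ≤ t * (hbar x - hbar xb) := by
      rw [hhbar x, hhbar xb, hxbx, hxx]
      nlinarith [hmin, hconvh, P3, Q2]
    exact le_of_mul_le_mul_left G ht0
  have tends : Filter.Tendsto
      (fun t : ℝ => θ₂/2*(1-t)*‖x-xb‖^2 + θ₃/6*((1-t)*t^2+(1-t)^3)*‖x-xb‖^3)
      (nhdsWithin 0 (Set.Ioi 0)) (nhds (θ₂/2*‖x-xb‖^2 + θ₃/6*‖x-xb‖^3)) := by
    have hco : Continuous (fun t : ℝ =>
        θ₂/2*(1-t)*‖x-xb‖^2 + θ₃/6*((1-t)*t^2+(1-t)^3)*‖x-xb‖^3) := by fun_prop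
    have h0 := (hco.tendsto 0).mono_left (nhdsWithin_le_nhds (s := Set.Ioi (0:ℝ)))
    convert h0 using 2 <;> norm_num
  have ev : ∀ᶠ t in nhdsWithin (0:ℝ) (Set.Ioi 0),
      θ₂/2*(1-t)*‖x-xb‖^2 + θ₃/6*((1-t)*t^2+(1-t)^3)*‖x-xb‖^3 ≤ hbar x - hbar xb := by
    filter_upwards [Ioo_mem_nhdsGT (by norm_num : (0:ℝ) < 1)] with t ht
    exact key t ht
  have final := le_of_tendsto tends ev
  linarith [final]
end

section
/- Let f have L2-Lipschitz Hessian and B_x satisfy −δ_low·I ⪯ ∇²f(x) − B_x ⪯ δ_up·I. Then for all x, y: f(y) ≤ φ_x(y) + (L2/6)‖y−x‖³ + (δ_up/2)‖y−x‖², and φ_x(y) ≤ f(y) + (L2/6)‖y−x‖³ + (δ_low/2)‖y−x‖², where φ_x(y) = f(x) + ⟨∇f(x), y−x⟩ + ½⟨B_x(y−x), y−x⟩. -/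
open RealInnerProductSpace

/-- Upper and lower bounds on a function in terms of the inexact quadratic
model under two-sided Loewner Hessian inexactness. -/
theorem stmt_17 {d : ℕ} (f : EuclideanSpace ℝ (Fin d) → ℝ)
    (Hess B : EuclideanSpace ℝ (Fin d) → (EuclideanSpace ℝ (Fin d) →L[ℝ] EuclideanSpace ℝ (Fin d)))
    (L2 δlow δup : ℝ) (hδlow : 0 ≤ δlow) (hδup : 0 ≤ δup)
    (hTaylor : ∀ x y, |f y - (f x + ⟪gradient f x, y - x⟫
        + 1 / 2 * ⟪Hess x (y - x), y - x⟫)| ≤ L2 / 6 * ‖y - x‖ ^ 3)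
    (hLoewner : ∀ x v, -δlow * ‖v‖ ^ 2 ≤ ⟪(Hess x - B x) v, v⟫
        ∧ ⟪(Hess x - B x) v, v⟫ ≤ δup * ‖v‖ ^ 2) :
    ∀ x y,
      f y ≤ (f x + ⟪gradient f x, y - x⟫ + 1 / 2 * ⟪B x (y - x), y - x⟫)
          + L2 / 6 * ‖y - x‖ ^ 3 + δup / 2 * ‖y - x‖ ^ 2 ∧
      (f x + ⟪gradient f x, y - x⟫ + 1 / 2 * ⟪B x (y - x), y - x⟫)
          ≤ f y + L2 / 6 * ‖y - x‖ ^ 3 + δlow / 2 * ‖y - x‖ ^ 2 := by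
  intro x y
  have hT := abs_le.mp (hTaylor x y)
  have hL := hLoewner x (y - x)
  rw [ContinuousLinearMap.sub_apply, inner_sub_left] at hL
  constructor <;> nlinarith [hT.1, hT.2, hL.1, hL.2]
end

section
/- Let f be μ-strongly star-convex with respect to its minimizer x*, have L2-Lipschitz Hessian, and let x_{t+1} minimize y ↦ φ_{x_t}(y) + (M/6)‖y − x_t‖³ + (δ_up/2)‖y − x_t‖² with B_{x_t} a (δ_up, δ_low)-inexact Hessian and M ≥ L2. Then with α_t = min{1/3, μ/(3(δ_up+δ_low)), √(μ/(2M‖x_t − x*‖))} one has f(x_{t+1}) − f(x*) ≤ (1 − α_t)(f(x_t) − f(x*)). -/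
open RealInnerProductSpace

set_option maxHeartbeats 1000000 in
/-- Linear decrease of the inexact cubic regularized Newton step for
μ-strongly star-convex functions. -/
theorem stmt_19 {d : ℕ} (f : EuclideanSpace ℝ (Fin d) → ℝ)
    (μ M δup δlow : ℝ) (hμ : 0 < μ) (hM : 0 < M) (hδup : 0 ≤ δup) (hδlow : 0 ≤ δlow)
    (xs : EuclideanSpace ℝ (Fin d)) (hmin : ∀ z, f xs ≤ f z)
    (hstar : ∀ x : EuclideanSpace ℝ (Fin d), ∀ a : ℝ, a ∈ Set.Icc (0 : ℝ) 1 →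
      f (a • x + (1 - a) • xs)
        ≤ a * f x + (1 - a) * f xs - a * (1 - a) * μ / 2 * ‖x - xs‖ ^ 2)
    (x₀ x₁ : EuclideanSpace ℝ (Fin d))
    (hstep : ∀ y, f x₁ ≤ f y + M / 3 * ‖y - x₀‖ ^ 3 + (δup + δlow) / 2 * ‖y - x₀‖ ^ 2) :
    f x₁ - f xs
      ≤ (1 - min (min ((1 : ℝ) / 3) (μ / (3 * (δup + δlow))))
            (Real.sqrt (μ / (2 * M * ‖x₀ - xs‖)))) * (f x₀ - f xs) := by
  set r : ℝ := ‖x₀ - xs‖ with hr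
  set δ : ℝ := δup + δlow with hδ
  set α : ℝ := min (min ((1 : ℝ) / 3) (μ / (3 * δ))) (Real.sqrt (μ / (2 * M * r))) with hα
  have hr0 : 0 ≤ r := norm_nonneg _
  have hδ0 : 0 ≤ δ := by positivity
  have hα0 : 0 ≤ α := by
    apply le_min (le_min (by norm_num) (by positivity)) (Real.sqrt_nonneg _)
  have hstep0 : f x₁ ≤ f x₀ := by
    have := hstep x₀
    simpa using this
  by_cases hrz : r = 0
  · have hαz : α = 0 := by
      have hs : Real.sqrt (μ / (2 * M * r)) = 0 := by
        rw [hrz]; simp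
      have : α ≤ 0 := by rw [hα, hs]; exact min_le_right _ _
      linarith
    rw [hαz]
    have hx : (x₀ : EuclideanSpace ℝ (Fin d)) = xs := by
      have h0 : ‖x₀ - xs‖ = 0 := hrz
      exact sub_eq_zero.mp (norm_eq_zero.mp h0)
    have hfx : f x₀ = f xs := by rw [hx]
    linarith [hstep0, hmin x₁]
  by_cases hδz : δ = 0
  · have hαz : α = 0 := by
      have h1 : μ / (3 * δ) = 0 := by rw [hδz]; simp
      have : α ≤ 0 := le_trans (min_le_left _ _) (by rw [h1]; exact min_le_right _ _)
      linarith
    rw [hαz]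
    linarith [hstep0]
  -- main case: r > 0, δ > 0
  have hrpos : 0 < r := lt_of_le_of_ne hr0 (Ne.symm hrz)
  have hδpos : 0 < δ := lt_of_le_of_ne hδ0 (Ne.symm hδz)
  have hα1 : α ≤ 1 / 3 := le_trans (min_le_left _ _) (min_le_left _ _)
  have hα2 : δ * α ≤ μ / 3 := by
    have : α ≤ μ / (3 * δ) := le_trans (min_le_left _ _) (min_le_right _ _)
    rw [le_div_iff₀ (by positivity)] at this
    nlinarith
  have hα3 : 2 * M * r * α ^ 2 ≤ μ := by
    have hs : α ≤ Real.sqrt (μ / (2 * M * r)) := min_le_right _ _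
    have h2 : α ^ 2 ≤ μ / (2 * M * r) := by
      have := Real.sq_sqrt (le_of_lt (show (0:ℝ) < μ / (2 * M * r) by positivity))
      nlinarith [Real.sqrt_nonneg (μ / (2 * M * r))]
    rw [le_div_iff₀ (by positivity)] at h2
    nlinarith
  -- the interpolated point
  set p : EuclideanSpace ℝ (Fin d) := (1 - α) • x₀ + α • xs with hp
  have hpx : p - x₀ = α • (xs - x₀) := by
    rw [hp]; module
  have hpnorm : ‖p - x₀‖ = α * r := by
    rw [hpx, norm_smul, Real.norm_eq_abs, abs_of_nonneg hα0, norm_sub_rev, hr]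
  have hfp : f p ≤ (1 - α) * f x₀ + α * f xs - (1 - α) * α * μ / 2 * r ^ 2 := by
    have := hstar x₀ (1 - α) ⟨by linarith, by linarith⟩
    have he : (1 - (1 - α)) = α := by ring
    rw [he] at this
    simpa [hp, hr] using this
  have hsf : f x₁ ≤ f p + M / 3 * (α * r) ^ 3 + δ / 2 * (α * r) ^ 2 := by
    have := hstep p
    rwa [hpnorm] at this
  have hkey : M / 3 * (α * r) ^ 3 + δ / 2 * (α * r) ^ 2 ≤ (1 - α) * α * μ / 2 * r ^ 2 := by
    have h1 := mul_le_mul_of_nonneg_right hα3 (show (0:ℝ) ≤ α * r ^ 2 / 6 by positivity)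
    have h2 := mul_le_mul_of_nonneg_right hα2 (show (0:ℝ) ≤ α * r ^ 2 / 2 by positivity)
    have h3 := mul_le_mul_of_nonneg_right hα1 (show (0:ℝ) ≤ μ * α * r ^ 2 / 2 by positivity)
    nlinarith [h1, h2, h3]
  nlinarith [hfp, hsf, hkey]
end
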